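/- Let R be a commutative Noetherian ring, G and M finitely generated R-modules, and n ≥ 0. With th^k(G) the filtration of the thick closure of G (th^1(G) = add(G), and th^k(G) consisting of direct summands of one term of a short exact sequence whose other two terms lie in th^{k−1}(G)), if M ∈ th^{n+1}(G) then an n-th syzygy Ω^n_R(M) belongs to |C|_{2^n}, where C = R ⊕ ⊕_{i=0}^{2n} Ω^i_R(G) and |C|_m denotes the m-fold extension closure of add(C). -/

import Mathlib

universe u

variable (R : Type u) [CommRing R]

/-- `M` is a direct summand of `N`. -/
def DirectSummand (M N : ModuleCat.{u} R) : Prop :=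
  ∃ (s : M →ₗ[R] N) (r : N →ₗ[R] M), r ∘ₗ s = LinearMap.id

/-- `M ∈ add G` : `M` is a direct summand of a finite direct sum of copies of `G`. -/
def InAdd (G M : ModuleCat.{u} R) : Prop :=
  ∃ k : ℕ, DirectSummand R M (ModuleCat.of R (Fin k → G))

/-- `ExtClos R G n M` means `M ∈ |G|ₙ`: `|G|₀` consists of zero modules, `|G|₁ = add G`,
and for `n ≥ 2`, `M ∈ |G|ₙ` iff there is a short exact sequence `0 → Y → M ⊕ W → X → 0`
with one of `X, Y` in `|G|ₙ₋₁` and the other in `|G|₁`. -/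
def ExtClos (G : ModuleCat.{u} R) : ℕ → ModuleCat.{u} R → Prop
  | 0, M => Subsingleton M
  | 1, M => InAdd R G M
  | n + 2, M => ∃ (W X Y : ModuleCat.{u} R) (i : Y →ₗ[R] M × W)
      (p : (M × W : Type u) →ₗ[R] X),
      Function.Injective i ∧ Function.Surjective p ∧
      LinearMap.range i = LinearMap.ker p ∧
      ((ExtClos G (n + 1) Y ∧ InAdd R G X) ∨ (InAdd R G Y ∧ ExtClos G (n + 1) X))

/-- `IsSyzygy R n K M` : `K` is an `n`-th syzygy of `M` along finite free resolutions
(`Ω⁰ M = M`). -/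
def IsSyzygy : ℕ → ModuleCat.{u} R → ModuleCat.{u} R → Prop
  | 0, K, M => Nonempty (K ≃ₗ[R] M)
  | n + 1, K, M => ∃ (k : ℕ) (f : (Fin k → R) →ₗ[R] M), Function.Surjective f ∧
      IsSyzygy n K (ModuleCat.of R (LinearMap.ker f))

/-- A thick subcategory of `mod R`: a full additive subcategory (containing the zero modules
and closed under finite direct sums) closed under direct summands and satisfying the
two-out-of-three property for short exact sequences. -/
def IsThick (S : Set (ModuleCat.{u} R)) : Prop :=
  (∀ M : ModuleCat.{u} R, Subsingleton M → M ∈ S) ∧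
  (∀ M N : ModuleCat.{u} R, M ∈ S → N ∈ S → ModuleCat.of R (↥M × ↥N) ∈ S) ∧
  (∀ M N : ModuleCat.{u} R, N ∈ S → DirectSummand R M N → M ∈ S) ∧
  (∀ (A B C : ModuleCat.{u} R) (f : A →ₗ[R] B) (g : B →ₗ[R] C),
    Function.Injective f → Function.Surjective g →
      LinearMap.range f = LinearMap.ker g →
      ((A ∈ S → B ∈ S → C ∈ S) ∧ (A ∈ S → C ∈ S → B ∈ S) ∧ (B ∈ S → C ∈ S → A ∈ S)))

/-- `Th R G n M` means `M ∈ thⁿ(G)`: `th¹(G) = add G`, and `M ∈ thⁿ(G)` for `n ≥ 2` iff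
there is a short exact sequence `0 → A → B → C → 0` with two of `A, B, C` in `thⁿ⁻¹(G)` and
`M` a direct summand of the third. -/
def Th (G : ModuleCat.{u} R) : ℕ → ModuleCat.{u} R → Prop
  | 0, M => Subsingleton M
  | 1, M => InAdd R G M
  | n + 2, M => ∃ (A B C : ModuleCat.{u} R) (f : A →ₗ[R] B) (g : B →ₗ[R] C),
      Function.Injective f ∧ Function.Surjective g ∧
      LinearMap.range f = LinearMap.ker g ∧
      ((Th G (n + 1) A ∧ Th G (n + 1) B ∧ DirectSummand R M C) ∨
       (Th G (n + 1) A ∧ Th G (n + 1) C ∧ DirectSummand R M B) ∨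
       (Th G (n + 1) B ∧ Th G (n + 1) C ∧ DirectSummand R M A))

/-!
Write `Cₜ = R ⊕ ⨁_{i<t} Ωⁱ G`. By Schanuel's lemma a first syzygy of `Ωⁱ G` is `Ωⁱ⁺¹ G` up to
free summands, so a first syzygy of `Cₜ` lies in `add Cₜ₊₁`; with the horseshoe lemma, taking
first syzygies then maps `|Cₜ|ₘ` into `|Cₜ₊₁|ₘ`.

Induct on `n`, with `t = 2n + 1`. Let `0 → A → B → C → 0` have two terms in `thⁿ⁺¹ G`, so that
their `n`-th syzygies lie in `|Cₜ|_{2ⁿ}`. The horseshoe lemma, applied to this sequence, to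
`0 → Ω B → Ω C → A → 0` or to `0 → Ω² C → Ω A → Ω B → 0`, shows that an `n`-th syzygy of `B`,
`Ω C` or `Ω A` is an extension of two modules of `|Cₜ₊₂|_{2ⁿ}`; so the third term has an
`(n+1)`-st syzygy in `|Cₜ₊₂|_{2ⁿ⁺¹}`. Passing to a direct summand is harmless because syzygies
are unique up to free summands and `R ∈ add Cₜ₊₂`.
-/

section

variable {R}

def finAppendLinearEquiv (X : Type*) [AddCommGroup X] [Module R X] (a b : ℕ) :
    ((Fin a → X) × (Fin b → X)) ≃ₗ[R] (Fin (a + b) → X) :=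
  (LinearEquiv.sumArrowLequivProdArrow (Fin a) (Fin b) R X).symm ≪≫ₗ
    LinearEquiv.funCongrLeft R X finSumFinEquiv.symm

namespace DirectSummand

theorem of_linearEquiv {M N : ModuleCat.{u} R} (e : M ≃ₗ[R] N) : DirectSummand R M N :=
  ⟨e.toLinearMap, e.symm.toLinearMap, by ext; simp⟩

theorem trans {M N P : ModuleCat.{u} R} (hMN : DirectSummand R M N) (hNP : DirectSummand R N P) :
    DirectSummand R M P := by
  obtain ⟨s, r, hrs⟩ := hMN
  obtain ⟨s', r', hrs'⟩ := hNP
  refine ⟨s' ∘ₗ s, r ∘ₗ r', ?_⟩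
  rw [LinearMap.comp_assoc, ← LinearMap.comp_assoc s, hrs', LinearMap.id_comp, hrs]

theorem inl (M N : ModuleCat.{u} R) : DirectSummand R M (ModuleCat.of R (M × N)) :=
  ⟨LinearMap.inl R M N, LinearMap.fst R M N, rfl⟩

theorem inr (M N : ModuleCat.{u} R) : DirectSummand R N (ModuleCat.of R (M × N)) :=
  ⟨LinearMap.inr R M N, LinearMap.snd R M N, rfl⟩

theorem pi_single {t : ℕ} (M : Fin t → ModuleCat.{u} R) (i : Fin t) :
    DirectSummand R (M i) (ModuleCat.of R ((j : Fin t) → M j)) :=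
  ⟨LinearMap.single R (fun j => M j) i, LinearMap.proj i, by ext; simp⟩

theorem prodMap {M N M' N' : ModuleCat.{u} R} (hM : DirectSummand R M M')
    (hN : DirectSummand R N N') :
    DirectSummand R (ModuleCat.of R (M × N)) (ModuleCat.of R (M' × N')) := by
  obtain ⟨s, r, hrs⟩ := hM
  obtain ⟨s', r', hrs'⟩ := hN
  refine ⟨s.prodMap s', r.prodMap r', ?_⟩
  rw [LinearMap.prodMap_comp, hrs, hrs', LinearMap.prodMap_id]

theorem piMap {t : ℕ} {M N : Fin t → ModuleCat.{u} R} (h : ∀ i, DirectSummand R (M i) (N i)) :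
    DirectSummand R (ModuleCat.of R ((i : Fin t) → M i)) (ModuleCat.of R ((i : Fin t) → N i)) := by
  choose s r hrs using h
  refine ⟨LinearMap.pi fun i => s i ∘ₗ LinearMap.proj i,
    LinearMap.pi fun i => r i ∘ₗ LinearMap.proj i, LinearMap.ext fun x => funext fun i => ?_⟩
  simpa using LinearMap.congr_fun (hrs i) (x i)

theorem of_subsingleton {M : ModuleCat.{u} R} [Subsingleton M] (N : ModuleCat.{u} R) :
    DirectSummand R M N :=
  ⟨0, 0, Subsingleton.elim _ _⟩

theorem surjective_retraction {M N : ModuleCat.{u} R} {s : M →ₗ[R] N} {r : N →ₗ[R] M}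
    (hrs : r ∘ₗ s = LinearMap.id) : Function.Surjective r :=
  fun x => ⟨s x, LinearMap.congr_fun hrs x⟩

theorem module_finite {M N : ModuleCat.{u} R} (h : DirectSummand R M N) [Module.Finite R N] :
    Module.Finite R M :=
  let ⟨_, r, hrs⟩ := h
  Module.Finite.of_surjective r (surjective_retraction hrs)

theorem exists_linearEquiv_prod {M N : ModuleCat.{u} R} (h : DirectSummand R M N) :
    ∃ W : ModuleCat.{u} R, Nonempty (N ≃ₗ[R] M × W) := by
  obtain ⟨s, r, hrs⟩ := h
  obtain ⟨e, -⟩ := ((LinearMap.exact_subtype_ker_map r).splitSurjectiveEquiv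
    (Submodule.injective_subtype _) ⟨s, hrs⟩)
  exact ⟨ModuleCat.of R (LinearMap.ker r), ⟨e ≪≫ₗ LinearEquiv.prodComm R _ _⟩⟩

end DirectSummand

namespace InAdd

variable {D M N : ModuleCat.{u} R}

theorem of_directSummand (hN : InAdd R D N) (h : DirectSummand R M N) : InAdd R D M :=
  let ⟨k, hk⟩ := hN
  ⟨k, h.trans hk⟩

theorem of_linearEquiv (hN : InAdd R D N) (e : M ≃ₗ[R] N) : InAdd R D M :=
  hN.of_directSummand (.of_linearEquiv e)

theorem self (D : ModuleCat.{u} R) : InAdd R D D :=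
  ⟨1, .of_linearEquiv (LinearEquiv.funUnique (Fin 1) R D).symm⟩

theorem of_subsingleton [Subsingleton M] : InAdd R D M :=
  ⟨0, .of_subsingleton _⟩

theorem trans {G : ModuleCat.{u} R} (hG : InAdd R D G) (hM : InAdd R G M) : InAdd R D M := by
  obtain ⟨k, hk⟩ := hM
  obtain ⟨t, ht⟩ := hG
  refine ⟨k * t, hk.trans ((DirectSummand.piMap fun _ : Fin k => ht).trans
    (.of_linearEquiv ?_))⟩
  exact (LinearEquiv.curry R D (Fin k) (Fin t)).symm ≪≫ₗ
    LinearEquiv.funCongrLeft R D finProdFinEquiv.symm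

theorem prod (hM : InAdd R D M) (hN : InAdd R D N) : InAdd R D (ModuleCat.of R (M × N)) := by
  obtain ⟨a, ha⟩ := hM
  obtain ⟨b, hb⟩ := hN
  exact ⟨a + b, (ha.prodMap hb).trans (.of_linearEquiv (finAppendLinearEquiv D a b))⟩

theorem pi : ∀ {t : ℕ} {M : Fin t → ModuleCat.{u} R}, (∀ i, InAdd R D (M i)) →
    InAdd R D (ModuleCat.of R ((i : Fin t) → M i))
  | 0, _, _ => of_subsingleton
  | _ + 1, M, h => ((h 0).prod (pi fun i => h i.succ)).of_linearEquiv
      (Fin.consLinearEquiv R fun i => M i).symm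

theorem free (hR : DirectSummand R (ModuleCat.of R R) D) (k : ℕ) :
    InAdd R D (ModuleCat.of R (Fin k → R)) :=
  ⟨k, DirectSummand.piMap fun _ : Fin k => hR⟩

theorem module_finite [Module.Finite R D] (h : InAdd R D M) : Module.Finite R M :=
  let ⟨_, hk⟩ := h
  hk.module_finite

end InAdd

def SES (A B C : ModuleCat.{u} R) : Prop :=
  ∃ (i : A →ₗ[R] B) (p : B →ₗ[R] C), Function.Injective i ∧ Function.Surjective p ∧
    Function.Exact i p

theorem ses_iff_range_eq_ker {A B C : ModuleCat.{u} R} : SES A B C ↔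
    ∃ (i : A →ₗ[R] B) (p : B →ₗ[R] C), Function.Injective i ∧ Function.Surjective p ∧
      LinearMap.range i = LinearMap.ker p := by
  simp only [SES, LinearMap.exact_iff, eq_comm]

namespace SES

variable {A B C : ModuleCat.{u} R}

theorem of_surjective (p : B →ₗ[R] C) (hp : Function.Surjective p) :
    SES (ModuleCat.of R (LinearMap.ker p)) B C :=
  ⟨(LinearMap.ker p).subtype, p, Subtype.val_injective, hp, LinearMap.exact_subtype_ker_map p⟩

theorem exists_free (M : ModuleCat.{u} R) [Module.Finite R M] :
    ∃ (k : ℕ) (K : ModuleCat.{u} R), SES K (ModuleCat.of R (Fin k → R)) M :=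
  let ⟨k, f, hf⟩ := Module.Finite.exists_fin' R M
  ⟨k, _, of_surjective (B := ModuleCat.of R (Fin k → R)) f hf⟩

theorem congr {A' B' C' : ModuleCat.{u} R} (h : SES A B C) (eA : A ≃ₗ[R] A') (eB : B ≃ₗ[R] B')
    (eC : C ≃ₗ[R] C') : SES A' B' C' := by
  obtain ⟨i, p, hi, hp, hex⟩ := h
  refine ⟨eB.toLinearMap ∘ₗ i ∘ₗ eA.symm.toLinearMap, eC.toLinearMap ∘ₗ p ∘ₗ eB.symm.toLinearMap,
    eB.injective.comp (hi.comp eA.symm.injective), eC.surjective.comp (hp.comp eB.symm.surjective),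
    hex.of_ladder_linearEquiv_of_exact (e₁ := eA) (e₂ := eB) (e₃ := eC) ?_ ?_⟩ <;>
  ext <;> simp

theorem linearEquiv_of_subsingleton_left [Subsingleton A] (h : SES A B C) :
    Nonempty (B ≃ₗ[R] C) := by
  obtain ⟨i, p, -, hp, hex⟩ := h
  refine ⟨LinearEquiv.ofBijective p ⟨(injective_iff_map_eq_zero p).mpr fun b hb => ?_, hp⟩⟩
  obtain ⟨a, rfl⟩ := (hex b).mp hb
  rw [Subsingleton.elim a 0, map_zero]

theorem linearEquiv_of_subsingleton_right [Subsingleton C] (h : SES A B C) :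
    Nonempty (A ≃ₗ[R] B) := by
  obtain ⟨i, p, hi, -, hex⟩ := h
  exact ⟨LinearEquiv.ofBijective i ⟨hi, fun b => (hex b).mp (Subsingleton.elim _ _)⟩⟩

theorem prod_right (h : SES A B C) (W : ModuleCat.{u} R) :
    SES A (ModuleCat.of R (B × W)) (ModuleCat.of R (C × W)) := by
  obtain ⟨i, p, hi, hp, hex⟩ := h
  refine ⟨LinearMap.inl R B W ∘ₗ i, p.prodMap LinearMap.id, LinearMap.inl_injective.comp hi,
    Prod.map_surjective.mpr ⟨hp, Function.surjective_id⟩, fun ⟨b, w⟩ => ?_⟩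
  simp only [LinearMap.prodMap_apply, LinearMap.id_apply, Prod.mk_eq_zero, hex b]
  aesop

theorem prod_left (h : SES A B C) (W : ModuleCat.{u} R) :
    SES (ModuleCat.of R (A × W)) (ModuleCat.of R (B × W)) C := by
  obtain ⟨i, p, hi, hp, hex⟩ := h
  refine ⟨i.prodMap LinearMap.id, p ∘ₗ LinearMap.fst R B W,
    Prod.map_injective.mpr ⟨hi, Function.injective_id⟩, hp.comp Prod.fst_surjective, fun x => ?_⟩
  simp [Prod.ext_iff, hex x.1]

/-- `E` is the preimage of `Y''` in `B`. -/
theorem pullback {Y T Y'' X'' : ModuleCat.{u} R} (h : SES Y B T) (h' : SES Y'' T X'') :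
    ∃ E : ModuleCat.{u} R, SES Y E Y'' ∧ SES E B X'' := by
  obtain ⟨i, p, hi, hp, hex⟩ := h
  obtain ⟨j, q, hj, hq, hex'⟩ := h'
  refine ⟨ModuleCat.of R (LinearMap.ker (q ∘ₗ p)), ?_, of_surjective _ (hq.comp hp)⟩
  have hpE (x : LinearMap.ker (q ∘ₗ p)) : p x ∈ LinearMap.range j := (hex' _).mp x.2
  refine congr (C := ModuleCat.of R (LinearMap.range j)) ?_ (LinearEquiv.refl R _)
    (LinearEquiv.refl R _) (LinearEquiv.ofInjective j hj).symm
  refine ⟨LinearMap.codRestrict _ i fun y => by simp [hex.apply_apply_eq_zero],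
    LinearMap.codRestrict _ (p ∘ₗ Submodule.subtype _) hpE,
    fun y y' hyy' => hi congr($hyy'.1), fun ⟨t, ht⟩ => ?_, fun x => ?_⟩
  · obtain ⟨b, rfl⟩ := hp t
    obtain ⟨y'', hy''⟩ := ht
    exact ⟨⟨b, by simp [← hy'', hex'.apply_apply_eq_zero]⟩, rfl⟩
  · simp only [Set.mem_range, Subtype.ext_iff, LinearMap.codRestrict_apply]
    exact hex x.1

theorem module_finite_left [IsNoetherianRing R] [Module.Finite R B] (h : SES A B C) :
    Module.Finite R A :=
  let ⟨i, _, hi, _⟩ := h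
  Module.Finite.of_injective i hi

theorem module_finite_middle [Module.Finite R A] [Module.Finite R C] (h : SES A B C) :
    Module.Finite R B :=
  let ⟨_, _, _, hp, hex⟩ := h
  Module.Finite.of_exact hex hp

theorem module_finite_right [Module.Finite R B] (h : SES A B C) : Module.Finite R C :=
  let ⟨_, p, _, hp, _⟩ := h
  Module.Finite.of_surjective p hp

theorem prod {A' B' C' : ModuleCat.{u} R} (h : SES A B C) (h' : SES A' B' C') :
    SES (ModuleCat.of R (A × A')) (ModuleCat.of R (B × B')) (ModuleCat.of R (C × C')) := by
  obtain ⟨i, p, hi, hp, hex⟩ := h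
  obtain ⟨i', p', hi', hp', hex'⟩ := h'
  refine ⟨i.prodMap i', p.prodMap p', Prod.map_injective.mpr ⟨hi, hi'⟩,
    Prod.map_surjective.mpr ⟨hp, hp'⟩, fun ⟨b, b'⟩ => ?_⟩
  simp only [LinearMap.prodMap_apply, Prod.mk_eq_zero, hex b, hex' b']
  aesop

theorem split [Module.Projective R C] (h : SES A B C) : Nonempty (B ≃ₗ[R] A × C) := by
  obtain ⟨i, p, hi, hp, hex⟩ := h
  obtain ⟨l, hl⟩ := Module.projective_lifting_property p LinearMap.id hp
  exact ⟨(hex.splitSurjectiveEquiv hi ⟨l, hl⟩).1⟩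

/-- Lift `P ↠ C` along `B ↠ C`; the induced `A ⊕ P ↠ B` has the same kernel `A'` as `P ↠ C`. -/
theorem rotate {A' P : ModuleCat.{u} R} [Module.Projective R P] (h : SES A B C)
    (h' : SES A' P C) : SES A' (ModuleCat.of R (A × P)) B := by
  obtain ⟨i, p, hi, hp, hex⟩ := h
  obtain ⟨i', f, hi', hf, hex'⟩ := h'
  obtain ⟨l, hl⟩ := Module.projective_lifting_property p f hp
  have hpl (x : P) : p (l x) = f x := LinearMap.congr_fun hl x
  have hφ : Function.Surjective (i.coprod l) := fun b => by
    obtain ⟨x, hx⟩ := hf (p b)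
    obtain ⟨a, ha⟩ := (hex (b - l x)).mp (by simp [hpl, hx])
    exact ⟨(a, x), by simp [ha]⟩
  have hsnd (w : LinearMap.ker (i.coprod l)) : f w.1.2 = 0 := by
    have hw : i w.1.1 + l w.1.2 = 0 := w.2
    rw [← hpl, eq_neg_of_add_eq_zero_right hw, map_neg, hex.apply_apply_eq_zero, neg_zero]
  let snd : LinearMap.ker (i.coprod l) →ₗ[R] LinearMap.ker f :=
    LinearMap.codRestrict _ (LinearMap.snd R A P ∘ₗ Submodule.subtype _) hsnd
  have hsnd_bij : Function.Bijective snd := by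
    refine ⟨fun w w' hww' => ?_, fun x => ?_⟩
    · have h2 : w.1.2 = w'.1.2 := congr($hww'.1)
      have hw : i w.1.1 + l w.1.2 = 0 := w.2
      have hw' : i w'.1.1 + l w'.1.2 = 0 := w'.2
      refine Subtype.ext (Prod.ext (hi ?_) h2)
      rw [eq_neg_of_add_eq_zero_left hw, eq_neg_of_add_eq_zero_left hw', h2]
    · obtain ⟨a, ha⟩ := (hex (l x)).mp (by rw [hpl, x.2])
      exact ⟨⟨(-a, x), by simp [ha]⟩, rfl⟩
  exact (of_surjective _ hφ).congr ((LinearEquiv.ofBijective snd hsnd_bij).trans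
    (LinearEquiv.ofInjective i' hi' ≪≫ₗ LinearEquiv.ofEq _ _ hex'.linearMap_ker_eq.symm).symm)
    (.refl R _) (.refl R _)

theorem schanuel {K K' P P' M : ModuleCat.{u} R} [Module.Projective R P] [Module.Projective R P']
    (h : SES K P M) (h' : SES K' P' M) : Nonempty ((K × P') ≃ₗ[R] (K' × P)) :=
  (h.rotate h').split

end SES

theorem extClos_add_two_iff {D M : ModuleCat.{u} R} {m : ℕ} :
    ExtClos R D (m + 2) M ↔ ∃ W X Y : ModuleCat.{u} R, SES Y (ModuleCat.of R (M × W)) X ∧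
      ((ExtClos R D (m + 1) Y ∧ InAdd R D X) ∨ (InAdd R D Y ∧ ExtClos R D (m + 1) X)) := by
  simp only [ses_iff_range_eq_ker]
  constructor
  · rintro ⟨W, X, Y, i, p, hi, hp, hex, hYX⟩
    exact ⟨W, X, Y, ⟨i, p, hi, hp, hex⟩, hYX⟩
  · rintro ⟨W, X, Y, ⟨i, p, hi, hp, hex⟩, hYX⟩
    exact ⟨W, X, Y, i, p, hi, hp, hex, hYX⟩

namespace ExtClos

variable {D M N : ModuleCat.{u} R}

theorem congr {M' : ModuleCat.{u} R} : ∀ {m : ℕ}, ExtClos R D m M → (M ≃ₗ[R] M') →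
    ExtClos R D m M'
  | 0, h, e => @Equiv.subsingleton _ _ e.symm.toEquiv h
  | 1, h, e => InAdd.of_linearEquiv h e.symm
  | _ + 2, h, e => by
    obtain ⟨W, X, Y, hs, hYX⟩ := extClos_add_two_iff.mp h
    exact extClos_add_two_iff.mpr ⟨W, X, Y,
      hs.congr (.refl R _) (e.prodCongr (.refl R _)) (.refl R _), hYX⟩

theorem of_ses_inAdd {Y E X : ModuleCat.{u} R} : ∀ {a : ℕ}, ExtClos R D a Y → InAdd R D X →
    SES Y E X → ExtClos R D (a + 1) E
  | 0, hY, hX, hs => by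
    have : Subsingleton Y := hY
    obtain ⟨e⟩ := hs.linearEquiv_of_subsingleton_left
    exact hX.of_linearEquiv e
  | _ + 1, hY, hX, hs => extClos_add_two_iff.mpr ⟨ModuleCat.of R PUnit, X, Y,
      hs.congr (.refl R _) LinearEquiv.prodUnique.symm (.refl R _), .inl ⟨hY, hX⟩⟩

theorem of_directSummand : ∀ {m : ℕ}, ExtClos R D m M → DirectSummand R N M → ExtClos R D m N
  | 0, h, ⟨_, _, hrs⟩ =>
    have : Subsingleton M := h
    (DirectSummand.surjective_retraction hrs).subsingleton
  | 1, h, hd => InAdd.of_directSummand h hd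
  | _ + 2, h, hd => by
    obtain ⟨W', ⟨e⟩⟩ := hd.exists_linearEquiv_prod
    obtain ⟨W, X, Y, hs, hYX⟩ := extClos_add_two_iff.mp h
    exact extClos_add_two_iff.mpr ⟨ModuleCat.of R (W' × W), X, Y, hs.congr (.refl R _)
      (e.prodCongr (.refl R _) ≪≫ₗ LinearEquiv.prodAssoc R _ _ _) (.refl R _), hYX⟩

theorem prod_inAdd {F : ModuleCat.{u} R} : ∀ {m : ℕ} {M : ModuleCat.{u} R}, ExtClos R D m M →
    m ≠ 0 → InAdd R D F → ExtClos R D m (ModuleCat.of R (M × F))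
  | 1, _, h, _, hF => InAdd.prod h hF
  | _ + 2, M, h, _, hF => by
    obtain ⟨W, X, Y, hs, hYX⟩ := extClos_add_two_iff.mp h
    refine extClos_add_two_iff.mpr ⟨W, X, ModuleCat.of R (Y × F), (hs.prod_left F).congr
      (.refl R _) (LinearEquiv.prodAssoc R M W F ≪≫ₗ (LinearEquiv.refl R M).prodCongr
        (LinearEquiv.prodComm R W F) ≪≫ₗ (LinearEquiv.prodAssoc R M F W).symm) (.refl R _), ?_⟩
    rcases hYX with ⟨hY, hX⟩ | ⟨hY, hX⟩
    · exact .inl ⟨prod_inAdd hY (Nat.succ_ne_zero _) hF, hX⟩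
    · exact .inr ⟨hY.prod hF, hX⟩

theorem of_ses : ∀ {a b : ℕ} {Y E X : ModuleCat.{u} R}, SES Y E X → ExtClos R D a Y →
    ExtClos R D b X → ExtClos R D (a + b) E
  | _, 0, _, _, X, hs, hY, hX => by
    have : Subsingleton X := hX
    obtain ⟨e⟩ := hs.linearEquiv_of_subsingleton_right
    exact hY.congr e
  | _, 1, _, _, _, hs, hY, hX => hY.of_ses_inAdd hX hs
  | a, b + 2, _, E, _, hs, hY, hX => by
    obtain ⟨W, X'', Y'', hs', hYX⟩ := extClos_add_two_iff.mp hX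
    obtain ⟨E'', hYE, hEX⟩ := (hs.prod_right W).pullback hs'
    refine of_directSummand ?_ (.inl E W)
    rcases hYX with ⟨hY'', hX''⟩ | ⟨hY'', hX''⟩
    · exact (of_ses hYE hY hY'').of_ses_inAdd hX'' hEX
    · rw [show a + (b + 2) = a + 1 + (b + 1) by omega]
      exact of_ses hEX (hY.of_ses_inAdd hY'' hYE) hX''

theorem mono {D' : ModuleCat.{u} R} (hD : InAdd R D' D) : ∀ {m : ℕ} {M : ModuleCat.{u} R},
    ExtClos R D m M → ExtClos R D' m M
  | 0, _, h => h
  | 1, _, h => hD.trans h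
  | _ + 2, _, h => by
    obtain ⟨W, X, Y, hs, hYX⟩ := extClos_add_two_iff.mp h
    exact extClos_add_two_iff.mpr ⟨W, X, Y, hs,
      hYX.imp (And.imp (mono hD) hD.trans) (And.imp hD.trans (mono hD))⟩

theorem module_finite [Module.Finite R D] : ∀ {m : ℕ} {M : ModuleCat.{u} R}, ExtClos R D m M →
    Module.Finite R M
  | 0, _, h => have : Subsingleton _ := h; inferInstance
  | 1, _, h => InAdd.module_finite h
  | _ + 2, M, h => by
    obtain ⟨W, X, Y, hs, hYX⟩ := extClos_add_two_iff.mp h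
    have : Module.Finite R Y := hYX.elim (fun h => module_finite h.1) (fun h => h.1.module_finite)
    have : Module.Finite R X := hYX.elim (fun h => h.2.module_finite) (fun h => module_finite h.2)
    have := hs.module_finite_middle
    exact (DirectSummand.inl M W).module_finite

end ExtClos

namespace IsSyzygy

variable {K K' : ModuleCat.{u} R}

theorem refl (M : ModuleCat.{u} R) : IsSyzygy R 0 M M := ⟨.refl R M⟩

theorem of_linearEquiv_left : ∀ {n : ℕ} {M : ModuleCat.{u} R}, IsSyzygy R n K' M →
    (K ≃ₗ[R] K') → IsSyzygy R n K M
  | 0, _, ⟨e'⟩, e => ⟨e ≪≫ₗ e'⟩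
  | _ + 1, _, ⟨k, f, hf, h⟩, e => ⟨k, f, hf, of_linearEquiv_left h e⟩

theorem of_linearEquiv_right : ∀ {n : ℕ} {M M' : ModuleCat.{u} R}, IsSyzygy R n K M →
    (M ≃ₗ[R] M') → IsSyzygy R n K M'
  | 0, _, _, ⟨e'⟩, e => ⟨e' ≪≫ₗ e⟩
  | _ + 1, _, _, ⟨k, f, hf, h⟩, e =>
    ⟨k, e.toLinearMap ∘ₗ f, e.surjective.comp hf, by rwa [LinearEquiv.ker_comp]⟩

theorem trans : ∀ {b a : ℕ} {K L M : ModuleCat.{u} R}, IsSyzygy R a K L → IsSyzygy R b L M →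
    IsSyzygy R (a + b) K M
  | 0, _, _, _, _, hK, ⟨e⟩ => hK.of_linearEquiv_right e
  | _ + 1, _, _, _, _, hK, ⟨k, f, hf, h⟩ => ⟨k, f, hf, trans hK h⟩

theorem of_subsingleton [Subsingleton K] : ∀ {n : ℕ} {M : ModuleCat.{u} R} [Subsingleton M],
    IsSyzygy R n K M
  | 0, _, _ => ⟨.ofSubsingleton _ _⟩
  | _ + 1, _, _ => ⟨0, 0, fun _ => ⟨0, Subsingleton.elim _ _⟩, of_subsingleton⟩

theorem module_finite [IsNoetherianRing R] : ∀ {n : ℕ} {M : ModuleCat.{u} R}, IsSyzygy R n K M →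
    [Module.Finite R M] → Module.Finite R K
  | 0, _, ⟨e⟩, _ => Module.Finite.equiv e.symm
  | _ + 1, _, ⟨_, _, _, h⟩, _ => module_finite h

end IsSyzygy

theorem exists_isSyzygy [IsNoetherianRing R] : ∀ (n : ℕ) (M : ModuleCat.{u} R) [Module.Finite R M],
    ∃ K : ModuleCat.{u} R, IsSyzygy R n K M
  | 0, M, _ => ⟨M, .refl M⟩
  | n + 1, M, _ => by
    obtain ⟨k, f, hf⟩ := Module.Finite.exists_fin' R M
    obtain ⟨K, hK⟩ := exists_isSyzygy n (ModuleCat.of R (LinearMap.ker f))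
    exact ⟨K, k, f, hf, hK⟩

theorem isSyzygy_succ_iff {n : ℕ} {K M : ModuleCat.{u} R} : IsSyzygy R (n + 1) K M ↔
    ∃ (k : ℕ) (K₀ : ModuleCat.{u} R), SES K₀ (ModuleCat.of R (Fin k → R)) M ∧
      IsSyzygy R n K K₀ := by
  constructor
  · rintro ⟨k, f, hf, h⟩
    exact ⟨k, _, .of_surjective f hf, h⟩
  · rintro ⟨k, K₀, ⟨i, p, hi, hp, hex⟩, h⟩
    exact ⟨k, p, hp, h.of_linearEquiv_right
      (LinearEquiv.ofInjective i hi ≪≫ₗ .ofEq _ _ hex.linearMap_ker_eq.symm)⟩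

theorem SES.isSyzygy_one {k : ℕ} {K M : ModuleCat.{u} R}
    (h : SES K (ModuleCat.of R (Fin k → R)) M) : IsSyzygy R 1 K M :=
  isSyzygy_succ_iff.mpr ⟨k, K, h, .refl K⟩

namespace IsSyzygy

theorem prod : ∀ {n : ℕ} {K L M N : ModuleCat.{u} R}, IsSyzygy R n K M → IsSyzygy R n L N →
    IsSyzygy R n (ModuleCat.of R (K × L)) (ModuleCat.of R (M × N))
  | 0, _, _, _, _, ⟨e⟩, ⟨e'⟩ => ⟨e.prodCongr e'⟩
  | _ + 1, _, _, _, _, hK, hL => by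
    obtain ⟨k, K₀, hs, hK₀⟩ := isSyzygy_succ_iff.mp hK
    obtain ⟨l, L₀, hs', hL₀⟩ := isSyzygy_succ_iff.mp hL
    exact isSyzygy_succ_iff.mpr ⟨k + l, _, (hs.prod hs').congr (.refl R _)
      (finAppendLinearEquiv R k l) (.refl R _), prod hK₀ hL₀⟩

theorem pi {n : ℕ} : ∀ {t : ℕ} {K M : Fin t → ModuleCat.{u} R}, (∀ i, IsSyzygy R n (K i) (M i)) →
    IsSyzygy R n (ModuleCat.of R ((i : Fin t) → K i)) (ModuleCat.of R ((i : Fin t) → M i))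
  | 0, _, _, _ => of_subsingleton
  | _ + 1, K, M, h => (((h 0).prod (pi fun i => h i.succ)).of_linearEquiv_left
      (Fin.consLinearEquiv R fun i => K i).symm).of_linearEquiv_right
      (Fin.consLinearEquiv R fun i => M i)

end IsSyzygy

theorem SES.horseshoe : ∀ {n : ℕ} {A B C KA KC : ModuleCat.{u} R}, SES A B C →
    IsSyzygy R n KA A → IsSyzygy R n KC C → ∃ KB : ModuleCat.{u} R, IsSyzygy R n KB B ∧ SES KA KB KC
  | 0, _, B, _, _, _, h, ⟨eA⟩, ⟨eC⟩ => ⟨B, .refl B, h.congr eA.symm (.refl R B) eC.symm⟩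
  | _ + 1, _, _, _, _, _, h, hA, hC => by
    obtain ⟨a, KA₀, hsA, hKA₀⟩ := isSyzygy_succ_iff.mp hA
    obtain ⟨c, KC₀, hsC, hKC₀⟩ := isSyzygy_succ_iff.mp hC
    obtain ⟨KB₀, hs₀, hsB⟩ := (hsA.prod_right _).pullback (h.rotate hsC)
    obtain ⟨KB, hKB, hs⟩ := horseshoe hs₀ hKA₀ hKC₀
    exact ⟨KB, isSyzygy_succ_iff.mpr ⟨a + c, KB₀,
      hsB.congr (.refl R _) (finAppendLinearEquiv R a c) (.refl R _), hKB⟩, hs⟩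

def StablyIso (M N : ModuleCat.{u} R) : Prop :=
  ∃ c d : ℕ, Nonempty ((M × (Fin c → R)) ≃ₗ[R] (N × (Fin d → R)))

theorem StablyIso.refl (M : ModuleCat.{u} R) : StablyIso M M := ⟨0, 0, ⟨.refl R _⟩⟩

theorem IsSyzygy.stablyIso : ∀ {n : ℕ} {K K' M M' : ModuleCat.{u} R}, IsSyzygy R n K M →
    IsSyzygy R n K' M' → StablyIso M M' → StablyIso K K'
  | 0, _, _, _, _, ⟨e⟩, ⟨e'⟩, ⟨c, d, ⟨eM⟩⟩ =>
    ⟨c, d, ⟨e.prodCongr (.refl R _) ≪≫ₗ eM ≪≫ₗ (e'.prodCongr (.refl R _)).symm⟩⟩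
  | _ + 1, _, _, _, _, hK, hK', ⟨c, d, ⟨e⟩⟩ => by
    obtain ⟨a, K₀, hs, hK₀⟩ := isSyzygy_succ_iff.mp hK
    obtain ⟨b, K₀', hs', hK₀'⟩ := isSyzygy_succ_iff.mp hK'
    obtain ⟨e₀⟩ := ((hs.prod_right (ModuleCat.of R (Fin c → R))).congr (.refl R _) (.refl R _)
      e).schanuel (hs'.prod_right (ModuleCat.of R (Fin d → R)))
    exact stablyIso hK₀ hK₀' ⟨b + d, a + c, ⟨((LinearEquiv.refl R _).prodCongr
      (finAppendLinearEquiv R b d).symm) ≪≫ₗ e₀ ≪≫ₗ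
      (LinearEquiv.refl R _).prodCongr (finAppendLinearEquiv R a c)⟩⟩

theorem ExtClos.of_stablyIso {D M N : ModuleCat.{u} R} {m : ℕ}
    (hR : DirectSummand R (ModuleCat.of R R) D) (hm : m ≠ 0) (h : ExtClos R D m N)
    (hMN : StablyIso M N) : ExtClos R D m M :=
  let ⟨c, d, ⟨e⟩⟩ := hMN
  (h.prod_inAdd hm (InAdd.free hR d)).of_directSummand
    ((DirectSummand.inl M (ModuleCat.of R (Fin c → R))).trans (.of_linearEquiv e))

def HasSyzygyIn (D : ModuleCat.{u} R) (m k : ℕ) (X : ModuleCat.{u} R) : Prop :=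
  ∃ S : ModuleCat.{u} R, IsSyzygy R k S X ∧ ExtClos R D m S

namespace HasSyzygyIn

variable {D X : ModuleCat.{u} R} {m k : ℕ}

theorem extClos_of_isSyzygy (hR : DirectSummand R (ModuleCat.of R R) D) (hm : m ≠ 0)
    (h : HasSyzygyIn D m k X) {S : ModuleCat.{u} R} (hS : IsSyzygy R k S X) : ExtClos R D m S :=
  let ⟨_, hS₀, h₀⟩ := h
  h₀.of_stablyIso hR hm (hS.stablyIso hS₀ (.refl X))

theorem of_isSyzygy {j : ℕ} {K : ModuleCat.{u} R} (h : HasSyzygyIn D m k K)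
    (hK : IsSyzygy R j K X) : HasSyzygyIn D m (k + j) X :=
  let ⟨S, hS, hSm⟩ := h
  ⟨S, hS.trans hK, hSm⟩

theorem syzygy [IsNoetherianRing R] [Module.Finite R X] (hR : DirectSummand R (ModuleCat.of R R) D)
    (hm : m ≠ 0) {j : ℕ} {K : ModuleCat.{u} R} (h : HasSyzygyIn D m (k + j) X)
    (hK : IsSyzygy R j K X) : HasSyzygyIn D m k K := by
  have := hK.module_finite
  obtain ⟨S, hS⟩ := exists_isSyzygy k K
  exact ⟨S, hS, h.extClos_of_isSyzygy hR hm (hS.trans hK)⟩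

theorem of_directSummand [IsNoetherianRing R] {B : ModuleCat.{u} R} [Module.Finite R B]
    (hR : DirectSummand R (ModuleCat.of R R) D) (hm : m ≠ 0) (h : HasSyzygyIn D m k B)
    (hXB : DirectSummand R X B) : HasSyzygyIn D m k X := by
  obtain ⟨W, ⟨e⟩⟩ := hXB.exists_linearEquiv_prod
  have : Module.Finite R X := hXB.module_finite
  have : Module.Finite R W :=
    Module.Finite.of_surjective (LinearMap.snd R X W ∘ₗ e.toLinearMap)
      (Prod.snd_surjective.comp e.surjective)
  obtain ⟨SX, hSX⟩ := exists_isSyzygy k X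
  obtain ⟨SW, hSW⟩ := exists_isSyzygy k W
  exact ⟨SX, hSX, (h.extClos_of_isSyzygy hR hm ((hSX.prod hSW).of_linearEquiv_right e.symm))
    |>.of_directSummand (.inl SX SW)⟩

theorem of_ses {a b : ℕ} {A B C : ModuleCat.{u} R} (hs : SES A B C) (hA : HasSyzygyIn D a k A)
    (hC : HasSyzygyIn D b k C) : HasSyzygyIn D (a + b) k B :=
  let ⟨_, hSA, hA'⟩ := hA
  let ⟨_, hSC, hC'⟩ := hC
  let ⟨KB, hKB, hs'⟩ := hs.horseshoe hSA hSC
  ⟨KB, hKB, ExtClos.of_ses hs' hA' hC'⟩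

theorem mono {D' : ModuleCat.{u} R} (hD : InAdd R D' D) (h : HasSyzygyIn D m k X) :
    HasSyzygyIn D' m k X :=
  let ⟨S, hS, hSm⟩ := h
  ⟨S, hS, hSm.mono hD⟩

theorem prod {N : ModuleCat.{u} R} (hX : HasSyzygyIn D 1 k X) (hN : HasSyzygyIn D 1 k N) :
    HasSyzygyIn D 1 k (ModuleCat.of R (X × N)) :=
  let ⟨_, hS, hSX⟩ := hX
  let ⟨_, hS', hSN⟩ := hN
  ⟨_, hS.prod hS', InAdd.prod hSX hSN⟩

theorem pi {t : ℕ} {M : Fin t → ModuleCat.{u} R} (h : ∀ i, HasSyzygyIn D 1 k (M i)) :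
    HasSyzygyIn D 1 k (ModuleCat.of R ((i : Fin t) → M i)) := by
  choose S hS hSM using h
  exact ⟨_, IsSyzygy.pi hS, InAdd.pi hSM⟩

theorem of_extClos [IsNoetherianRing R] [Module.Finite R D] {D' : ModuleCat.{u} R}
    (hR : DirectSummand R (ModuleCat.of R R) D') (hD : HasSyzygyIn D' 1 k D) :
    ∀ {m : ℕ} {S : ModuleCat.{u} R}, ExtClos R D m S → HasSyzygyIn D' m k S
  | 0, S, h => have : Subsingleton S := h; ⟨S, .of_subsingleton, h⟩
  | 1, _, ⟨_, hS⟩ => (pi fun _ => hD).of_directSummand hR one_ne_zero hS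
  | m + 2, S, h => by
    obtain ⟨W, X, Y, hs, hYX⟩ := extClos_add_two_iff.mp h
    have : Module.Finite R Y := hYX.elim (·.1.module_finite) (·.1.module_finite)
    have : Module.Finite R X := hYX.elim (·.2.module_finite) (·.2.module_finite)
    have := hs.module_finite_middle
    rcases hYX with ⟨hY, hX⟩ | ⟨hY, hX⟩
    · exact ((of_extClos hR hD hY).of_ses hs (of_extClos hR hD (m := 1) hX)).of_directSummand
        hR (by omega) (.inl S W)
    · rw [show m + 2 = 1 + (m + 1) by omega]
      exact ((of_extClos hR hD (m := 1) hY).of_ses hs (of_extClos hR hD hX)).of_directSummand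
        hR (by omega) (.inl S W)

end HasSyzygyIn

def syzygyGen (Ω : ℕ → ModuleCat.{u} R) (t : ℕ) : ModuleCat.{u} R :=
  ModuleCat.of R (R × ((i : Fin t) → Ω i))

variable {Ω : ℕ → ModuleCat.{u} R}

theorem directSummand_syzygyGen (Ω : ℕ → ModuleCat.{u} R) (t : ℕ) :
    DirectSummand R (ModuleCat.of R R) (syzygyGen Ω t) :=
  .inl (ModuleCat.of R R) (ModuleCat.of R ((i : Fin t) → Ω i))

theorem inAdd_syzygyGen {i t : ℕ} (h : i < t) : InAdd R (syzygyGen Ω t) (Ω i) :=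
  (InAdd.self _).of_directSummand ((DirectSummand.pi_single (fun j : Fin t => Ω j) ⟨i, h⟩).trans
    (.inr (ModuleCat.of R R) (ModuleCat.of R ((i : Fin t) → Ω i))))

theorem inAdd_syzygyGen_of_le {t t' : ℕ} (h : t ≤ t') :
    InAdd R (syzygyGen Ω t') (syzygyGen Ω t) :=
  InAdd.prod ((InAdd.self _).of_directSummand (directSummand_syzygyGen Ω t'))
    (InAdd.pi fun i => inAdd_syzygyGen (i.2.trans_le h))

variable [IsNoetherianRing R] {G : ModuleCat.{u} R} [Module.Finite R G]

theorem module_finite_syzygyGen (hΩ : ∀ i, IsSyzygy R i (Ω i) G) (t : ℕ) :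
    Module.Finite R (syzygyGen Ω t) :=
  have (i : Fin t) : Module.Finite R (Ω i) := (hΩ i).module_finite
  Module.Finite.prod

theorem hasSyzygyIn_syzygyGen (hΩ : ∀ i, IsSyzygy R i (Ω i) G) (t : ℕ) :
    HasSyzygyIn (syzygyGen Ω (t + 1)) 1 1 (syzygyGen Ω t) := by
  have hRing : HasSyzygyIn (syzygyGen Ω (t + 1)) 1 1 (ModuleCat.of R R) := by
    let e := LinearEquiv.funUnique (Fin 1) R R
    have : Subsingleton (LinearMap.ker e.toLinearMap) := by
      rw [LinearEquiv.ker]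
      infer_instance
    exact ⟨_, ⟨1, e.toLinearMap, e.surjective, .refl _⟩, InAdd.of_subsingleton⟩
  have hΩ' (i : Fin t) : HasSyzygyIn (syzygyGen Ω (t + 1)) 1 1 (Ω i) := by
    have hG : HasSyzygyIn (syzygyGen Ω (t + 1)) 1 (1 + i) G :=
      ⟨Ω (i + 1), Nat.add_comm 1 i ▸ hΩ (i + 1), inAdd_syzygyGen (Nat.succ_lt_succ i.2)⟩
    exact hG.syzygy (directSummand_syzygyGen Ω _) one_ne_zero (hΩ i)
  exact hRing.prod (HasSyzygyIn.pi hΩ')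

namespace HasSyzygyIn

variable {m k t : ℕ}

theorem syzygyGen_succ (hΩ : ∀ i, IsSyzygy R i (Ω i) G) {X : ModuleCat.{u} R}
    (h : HasSyzygyIn (syzygyGen Ω t) m k X) : HasSyzygyIn (syzygyGen Ω (t + 1)) m (k + 1) X := by
  obtain ⟨S, hS, hSm⟩ := h
  have := module_finite_syzygyGen hΩ t
  rw [Nat.add_comm k]
  exact (of_extClos (directSummand_syzygyGen Ω _) (hasSyzygyIn_syzygyGen hΩ t) hSm).of_isSyzygy hS

variable {A B C : ModuleCat.{u} R}

theorem ses_middle (hΩ : ∀ i, IsSyzygy R i (Ω i) G) (hs : SES A B C)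
    (hA : HasSyzygyIn (syzygyGen Ω t) m k A) (hC : HasSyzygyIn (syzygyGen Ω t) m k C) :
    HasSyzygyIn (syzygyGen Ω (t + 2)) (m + m) (k + 1) B :=
  ((hA.of_ses hs hC).syzygyGen_succ hΩ).mono (inAdd_syzygyGen_of_le (Nat.le_succ _))

theorem ses_right [Module.Finite R B] (hΩ : ∀ i, IsSyzygy R i (Ω i) G) (hm : m ≠ 0)
    (hs : SES A B C) (hA : HasSyzygyIn (syzygyGen Ω t) m k A)
    (hB : HasSyzygyIn (syzygyGen Ω t) m k B) :
    HasSyzygyIn (syzygyGen Ω (t + 2)) (m + m) (k + 1) C := by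
  obtain ⟨b, ΩB, hsB⟩ := SES.exists_free B
  obtain ⟨E, hsE, hsC⟩ := hsB.pullback hs
  have hΩB : HasSyzygyIn (syzygyGen Ω (t + 1)) m k ΩB :=
    (hB.syzygyGen_succ hΩ).syzygy (directSummand_syzygyGen Ω _) hm hsB.isSyzygy_one
  exact ((hΩB.of_ses hsE (hA.mono (inAdd_syzygyGen_of_le (Nat.le_succ _)))).of_isSyzygy
    hsC.isSyzygy_one).mono (inAdd_syzygyGen_of_le (Nat.le_succ _))

theorem ses_left [Module.Finite R B] [Module.Finite R C] (hΩ : ∀ i, IsSyzygy R i (Ω i) G)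
    (hm : m ≠ 0) (hs : SES A B C) (hB : HasSyzygyIn (syzygyGen Ω t) m k B)
    (hC : HasSyzygyIn (syzygyGen Ω t) m k C) :
    HasSyzygyIn (syzygyGen Ω (t + 2)) (m + m) (k + 1) A := by
  obtain ⟨b, ΩB, hsB⟩ := SES.exists_free B
  obtain ⟨ΩC, hsΩ, hsC⟩ := hsB.pullback hs
  have := hsC.module_finite_left
  obtain ⟨c, Ω₂C, hsΩC⟩ := SES.exists_free ΩC
  obtain ⟨ΩA, hsΩ', hsA⟩ := hsΩC.pullback hsΩ
  have hΩ₂C : HasSyzygyIn (syzygyGen Ω (t + 2)) m k Ω₂C :=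
    ((hC.syzygyGen_succ hΩ).syzygyGen_succ hΩ).syzygy (j := 1 + 1)
      (directSummand_syzygyGen Ω _) hm (hsΩC.isSyzygy_one.trans hsC.isSyzygy_one)
  have hΩB : HasSyzygyIn (syzygyGen Ω (t + 2)) m k ΩB :=
    ((hB.syzygyGen_succ hΩ).syzygy (directSummand_syzygyGen Ω _) hm
      hsB.isSyzygy_one).mono (inAdd_syzygyGen_of_le (Nat.le_succ _))
  exact (hΩ₂C.of_ses hsΩ' hΩB).of_isSyzygy hsA.isSyzygy_one

end HasSyzygyIn

theorem Th.module_finite : ∀ {n : ℕ} {M : ModuleCat.{u} R}, Th R G n M → Module.Finite R M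
  | 0, _, h => have : Subsingleton _ := h; inferInstance
  | 1, _, h => InAdd.module_finite h
  | _ + 2, _, ⟨_, _, _, f, g, hf, hg, hfg, hABC⟩ => by
    have hs : SES _ _ _ := ses_iff_range_eq_ker.mpr ⟨f, g, hf, hg, hfg⟩
    rcases hABC with ⟨-, hB, hMC⟩ | ⟨hA, hC, hMB⟩ | ⟨hB, -, hMA⟩
    · have := module_finite hB
      have := hs.module_finite_right
      exact hMC.module_finite
    · have := module_finite hA
      have := module_finite hC
      have := hs.module_finite_middle
      exact hMB.module_finite
    · have := module_finite hB
      have := hs.module_finite_left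
      exact hMA.module_finite

theorem Th.hasSyzygyIn (hΩ : ∀ i, IsSyzygy R i (Ω i) G) : ∀ (k : ℕ) {M : ModuleCat.{u} R},
    Th R G (k + 1) M → HasSyzygyIn (syzygyGen Ω (2 * k + 1)) (2 ^ k) k M
  | 0, M, h =>
    let ⟨e⟩ := hΩ 0
    ⟨M, .refl M, ((inAdd_syzygyGen Nat.zero_lt_one).of_linearEquiv e.symm).trans h⟩
  | k + 1, M, ⟨A, B, C, f, g, hf, hg, hfg, hABC⟩ => by
    have hs : SES A B C := ses_iff_range_eq_ker.mpr ⟨f, g, hf, hg, hfg⟩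
    have ih {X : ModuleCat.{u} R} (hX : Th R G (k + 1) X) := Th.hasSyzygyIn hΩ k hX
    have hR := directSummand_syzygyGen Ω (2 * k + 1 + 2)
    have hm : 2 ^ k ≠ 0 := by positivity
    have hmm : 2 ^ k + 2 ^ k ≠ 0 := by positivity
    rw [pow_succ, mul_two, show 2 * (k + 1) + 1 = 2 * k + 1 + 2 by ring]
    rcases hABC with ⟨hA, hB, hMC⟩ | ⟨hA, hC, hMB⟩ | ⟨hB, hC, hMA⟩
    · have := hB.module_finite
      have := hs.module_finite_right
      exact ((ih hA).ses_right hΩ hm hs (ih hB)).of_directSummand hR hmm hMC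
    · have := hA.module_finite
      have := hC.module_finite
      have := hs.module_finite_middle
      exact ((ih hA).ses_middle hΩ hs (ih hC)).of_directSummand hR hmm hMB
    · have := hB.module_finite
      have := hC.module_finite
      have := hs.module_finite_left
      exact ((ih hB).ses_left hΩ hm hs (ih hC)).of_directSummand hR hmm hMA

end

theorem th_to_extClos_syzygy [IsNoetherianRing R] (G M : ModuleCat.{u} R)
    [Module.Finite R G] (n : ℕ)
    (hM : Th R G (n + 1) M) :
    ∃ Ω : Fin (2 * n + 1) → ModuleCat.{u} R,
      (∀ i : Fin (2 * n + 1), IsSyzygy R i (Ω i) G) ∧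
      ∃ S : ModuleCat.{u} R, IsSyzygy R n S M ∧
        ExtClos R (ModuleCat.of R (R × ((i : Fin (2 * n + 1)) → Ω i))) (2 ^ n) S := by
  choose Ω hΩ using fun i => exists_isSyzygy i G
  obtain ⟨S, hS, hSC⟩ := Th.hasSyzygyIn hΩ n hM
  exact ⟨fun i => Ω i, fun i => hΩ i, S, hS, hSC⟩
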